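/- For distinct exponent multi-indices i > j (lexicographic order) with equal weights |i| = |j|, the contravariant pairing ⟨L^i·1, M^j·1⟩ in the Verma module M_g(h1,h2,c1,c2) vanishes; equivalently, L_1^{i_1}L_2^{i_2}⋯ M_{-2}^{j_2}M_{-1}^{j_1}·1 = 0. -/
import Mathlib


/-- A representation of the N=1 BMS superalgebra on a complex vector space `V`,
with `Q k` denoting the action of the odd generator `Q_{k+1/2}`, and the central
elements acting by the scalars `c1`, `c2`. -/
structure BMSRep (V : Type*) [AddCommGroup V] [Module ℂ V] where
  L : ℤ → Module.End ℂ V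
  M : ℤ → Module.End ℂ V
  Q : ℤ → Module.End ℂ V
  c1 : ℂ
  c2 : ℂ
  comm_LL : ∀ m n : ℤ, ⁅L m, L n⁆ = ((m : ℂ) - n) • L (m + n)
      + (if m + n = 0 then ((m : ℂ)^3 - m) / 12 * c1 else 0) • (1 : Module.End ℂ V)
  comm_LM : ∀ m n : ℤ, ⁅L m, M n⁆ = ((m : ℂ) - n) • M (m + n)
      + (if m + n = 0 then ((m : ℂ)^3 - m) / 12 * c2 else 0) • (1 : Module.End ℂ V)
  comm_MM : ∀ m n : ℤ, ⁅M m, M n⁆ = 0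
  comm_LQ : ∀ m k : ℤ, ⁅L m, Q k⁆ = ((m : ℂ) / 2 - ((k : ℂ) + 1/2)) • Q (m + k)
  comm_MQ : ∀ m k : ℤ, ⁅M m, Q k⁆ = 0
  anti_QQ : ∀ k l : ℤ, Q k * Q l + Q l * Q k = (2 : ℂ) • M (k + l + 1)
      + (if k + l + 1 = 0 then (((k : ℂ) + 1/2)^2 - 1/4) / 3 * c2 else 0) • (1 : Module.End ℂ V)

namespace BMSRep

variable {V : Type*} [AddCommGroup V] [Module ℂ V]

/-- A submodule invariant under the action. -/
def Invariant (ρ : BMSRep V) (W : Submodule ℂ V) : Prop :=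
  ∀ w ∈ W, ∀ n : ℤ, ρ.L n w ∈ W ∧ ρ.M n w ∈ W ∧ ρ.Q n w ∈ W

/-- Simplicity: `V` is nonzero and has no nontrivial invariant submodule. -/
def IsSimple (ρ : BMSRep V) : Prop :=
  (∃ v : V, v ≠ 0) ∧ ∀ W : Submodule ℂ V, ρ.Invariant W → W = ⊥ ∨ W = ⊤

/-- Smoothness: every vector is killed by all sufficiently positive modes. -/
def IsSmooth (ρ : BMSRep V) : Prop :=
  ∀ w : V, ∃ N : ℤ, ∀ i : ℤ, N ≤ i → ρ.L i w = 0 ∧ ρ.M i w = 0 ∧ ρ.Q (i - 1) w = 0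

end BMSRep

/-- `tower f N = f N * ⋯ * f 2 * f 1` (empty product for `N = 0`). -/
def tower {V : Type*} [AddCommGroup V] [Module ℂ V]
    (f : ℕ → Module.End ℂ V) : ℕ → Module.End ℂ V
  | 0 => 1
  | n + 1 => f (n + 1) * tower f n

/-- `towerR f N = f 1 * f 2 * ⋯ * f N`. -/
def towerR {V : Type*} [AddCommGroup V] [Module ℂ V]
    (f : ℕ → Module.End ℂ V) : ℕ → Module.End ℂ V
  | 0 => 1
  | n + 1 => towerR f n * f (n + 1)

namespace BMSRep

variable {V : Type*} [AddCommGroup V] [Module ℂ V]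

/-- `⋯ L_{-2}^{i_2} L_{-1}^{i_1}` as an endomorphism. -/
noncomputable def monL (ρ : BMSRep V) (i : ℕ →₀ ℕ) : Module.End ℂ V :=
  tower (fun a => (ρ.L (-(a : ℤ)))^(i a)) (i.support.sup id)

/-- `⋯ M_{-2}^{j_2} M_{-1}^{j_1}` as an endomorphism. -/
noncomputable def monM (ρ : BMSRep V) (j : ℕ →₀ ℕ) : Module.End ℂ V :=
  tower (fun a => (ρ.M (-(a : ℤ)))^(j a)) (j.support.sup id)

/-- `⋯ Q_{-2+1/2}^{k_2} Q_{-1+1/2}^{k_1}` as an endomorphism, where `K` is the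
set of `t ≥ 1` with `k_t = 1`. -/
noncomputable def monQ (ρ : BMSRep V) (K : Finset ℕ) : Module.End ℂ V :=
  tower (fun t => if t ∈ K then ρ.Q (-(t : ℤ)) else 1) (K.sup id)

/-- `L_1^{i_1} L_2^{i_2} ⋯` (raising operators) as an endomorphism. -/
noncomputable def raiseL (ρ : BMSRep V) (i : ℕ →₀ ℕ) : Module.End ℂ V :=
  towerR (fun a => (ρ.L (a : ℤ))^(i a)) (i.support.sup id)

end BMSRep

/-- Index set for the PBW monomial basis `Q^k M^j L^i · 1` of a Verma module:
exponents of `L_{-a}`, `M_{-a}` for `a ≥ 1` and the set of `t ≥ 1` with a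
factor `Q_{-t+1/2}`. -/
structure VIdx where
  i : ℕ →₀ ℕ
  j : ℕ →₀ ℕ
  K : Finset ℕ
  hi : i 0 = 0
  hj : j 0 = 0
  hK : 0 ∉ K

/-- Twice the weight `w(i,j,k) = Σ a i_a + Σ a j_a + Σ_{t∈K} (t - 1/2)`. -/
def VIdx.wt2 (p : VIdx) : ℕ :=
  2 * (p.i.sum fun a m => a * m) + 2 * (p.j.sum fun a m => a * m)
    + (p.K.sum fun t => 2 * t - 1)

namespace BMSRep

variable {V : Type*} [AddCommGroup V] [Module ℂ V]

/-- The PBW monomial `Q^k M^j L^i` attached to a Verma index. -/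
noncomputable def mon (ρ : BMSRep V) (p : VIdx) : Module.End ℂ V :=
  ρ.monQ p.K * ρ.monM p.j * ρ.monL p.i

/-- `(V, v)` is (a copy of) the Verma module `M_g(h1, h2, c1, c2)`:
`v` is a highest weight vector of weight `(h1, h2)` and the PBW monomials
applied to `v` form a basis of `V`. -/
structure IsVerma (ρ : BMSRep V) (v : V) (h1 h2 : ℂ) : Prop where
  hwL : ∀ n : ℤ, 1 ≤ n → ρ.L n v = 0
  hwM : ∀ n : ℤ, 1 ≤ n → ρ.M n v = 0
  hwQ : ∀ k : ℤ, 0 ≤ k → ρ.Q k v = 0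
  hL0 : ρ.L 0 v = h1 • v
  hM0 : ρ.M 0 v = h2 • v
  indep : LinearIndependent ℂ (fun p : VIdx => ρ.mon p v)
  span : Submodule.span ℂ (Set.range fun p : VIdx => ρ.mon p v) = ⊤

end BMSRep


/-! ### Auxiliary development -/

section Aux

open BMSRep

variable {V : Type*} [AddCommGroup V] [Module ℂ V]

lemma tower_succ (f : ℕ → Module.End ℂ V) (n : ℕ) :
    tower f (n + 1) = f (n + 1) * tower f n := rfl

lemma towerR_succ (f : ℕ → Module.End ℂ V) (n : ℕ) :
    towerR f (n + 1) = towerR f n * f (n + 1) := rfl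

lemma commute_tower (x : Module.End ℂ V) (f : ℕ → Module.End ℂ V)
    (h : ∀ b, Commute x (f b)) : ∀ n, Commute x (tower f n)
  | 0 => Commute.one_right x
  | n + 1 => (h (n + 1)).mul_right (commute_tower x f h n)

lemma tower_congr {f g : ℕ → Module.End ℂ V} :
    ∀ n, (∀ a, a ≤ n → f a = g a) → tower f n = tower g n
  | 0, _ => rfl
  | n + 1, h => by
      rw [tower_succ, tower_succ, h (n + 1) le_rfl,
        tower_congr n (fun a ha => h a (ha.trans (Nat.le_succ n)))]

lemma M_commute (ρ : BMSRep V) (a b : ℤ) : Commute (ρ.M a) (ρ.M b) := by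
  have h := ρ.comm_MM a b
  rw [Ring.lie_def, sub_eq_zero] at h
  exact h

lemma M_commute_monM (ρ : BMSRep V) (p : ℤ) (j : ℕ →₀ ℕ) :
    Commute (ρ.M p) (ρ.monM j) :=
  commute_tower _ _ (fun b => (M_commute ρ p _).pow_right _) _

lemma monM_eq_tower (ρ : BMSRep V) (j : ℕ →₀ ℕ) {n : ℕ} (hn : j.support.sup id ≤ n) :
    ρ.monM j = tower (fun a => (ρ.M (-(a : ℤ)))^(j a)) n := by
  induction n, hn using Nat.le_induction with
  | base => rfl
  | succ n hn ih =>
    rw [ih, tower_succ]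
    have hj : j (n + 1) = 0 := by
      by_contra h
      have h1 : (n + 1) ∈ j.support := Finsupp.mem_support_iff.mpr h
      have h2 := Finset.le_sup (f := id) h1
      simp only [id] at h2
      omega
    rw [hj, pow_zero, one_mul]

lemma M_mul_tower (ρ : BMSRep V) (j : ℕ →₀ ℕ) (c : ℕ) (hc : 1 ≤ c)
    (j2 : ℕ →₀ ℕ) (hj2 : j2 = j + Finsupp.single c 1) :
    ∀ n, c ≤ n →
      ρ.M (-(c : ℤ)) * tower (fun a => (ρ.M (-(a : ℤ)))^(j a)) n
        = tower (fun a => (ρ.M (-(a : ℤ)))^(j2 a)) n := by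
  have hj2c : j2 c = j c + 1 := by
    rw [hj2, Finsupp.add_apply, Finsupp.single_apply, if_pos rfl]
  have hj2ne : ∀ a, a ≠ c → j2 a = j a := by
    intro a ha
    rw [hj2, Finsupp.add_apply, Finsupp.single_apply,
      if_neg (fun h => ha h.symm), add_zero]
  intro n hn
  induction n, hn using Nat.le_induction with
  | base =>
    obtain ⟨d, rfl⟩ : ∃ d, c = d + 1 := ⟨c - 1, by omega⟩
    rw [tower_succ, tower_succ, ← mul_assoc, ← pow_succ', hj2c]
    congr 1
    exact (tower_congr d (fun a ha => by rw [hj2ne a (by omega)])).symm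
  | succ n hn ih =>
    rw [tower_succ, tower_succ, ← mul_assoc,
      ((M_commute ρ (-(c : ℤ)) (-((n + 1 : ℕ) : ℤ))).pow_right (j (n + 1))).eq,
      mul_assoc, ih, hj2ne (n + 1) (by omega)]

lemma M_mul_monM (ρ : BMSRep V) (j : ℕ →₀ ℕ) (c : ℕ) (hc : 1 ≤ c) :
    ρ.M (-(c : ℤ)) * ρ.monM j = ρ.monM (j + Finsupp.single c 1) := by
  set n := max (j.support.sup id) c with hn
  have hb : (j + Finsupp.single c 1).support.sup id ≤ n := by
    apply Finset.sup_le
    intro a ha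
    have hne := Finsupp.mem_support_iff.mp ha
    rcases eq_or_ne (j a) 0 with h0 | h0
    · have hac : a = c := by
        by_contra hcc
        exact hne (by
          rw [Finsupp.add_apply, h0, Finsupp.single_apply,
            if_neg (fun h => hcc h.symm), add_zero])
      simp only [id, hac]
      exact le_max_right _ _
    · exact le_trans (Finset.le_sup (f := id) (Finsupp.mem_support_iff.mpr h0))
        (le_max_left _ _)
  rw [monM_eq_tower ρ j (le_max_left _ _), monM_eq_tower ρ _ hb,
    M_mul_tower ρ j c hc _ rfl n (le_max_right _ _)]

/-- Tail weight `Σ_{a ≥ r} a · j_a`. -/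
def tailwt (r : ℕ) (j : ℕ →₀ ℕ) : ℕ := j.sum fun a m => if r ≤ a then a * m else 0

lemma tailwt_add_single (r c : ℕ) (j : ℕ →₀ ℕ) :
    tailwt r (j + Finsupp.single c 1) = tailwt r j + (if r ≤ c then c else 0) := by
  unfold tailwt
  rw [Finsupp.sum_add_index (fun a _ => by simp) (fun a _ b₁ b₂ => by
    split_ifs <;> ring), Finsupp.sum_single_index (by simp)]
  split_ifs <;> simp

/-- The span of the `M`-monomials applied to `v` with tail weight at most `T`. -/
def Wsp (ρ : BMSRep V) (v : V) (r : ℕ) (T : ℤ) : Submodule ℂ V :=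
  Submodule.span ℂ {x | ∃ j : ℕ →₀ ℕ, j 0 = 0 ∧ (tailwt r j : ℤ) ≤ T ∧ x = ρ.monM j v}

lemma Wsp_mono (ρ : BMSRep V) (v : V) (r : ℕ) {T T' : ℤ} (h : T ≤ T') :
    Wsp ρ v r T ≤ Wsp ρ v r T' :=
  Submodule.span_mono (fun x hx => by
    obtain ⟨j, h0, hw, rfl⟩ := hx; exact ⟨j, h0, hw.trans h, rfl⟩)

lemma mem_Wsp (ρ : BMSRep V) (v : V) (r : ℕ) (T : ℤ) (j : ℕ →₀ ℕ)
    (h0 : j 0 = 0) (hw : (tailwt r j : ℤ) ≤ T) :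
    ρ.monM j v ∈ Wsp ρ v r T := Submodule.subset_span ⟨j, h0, hw, rfl⟩

lemma Wsp_eq_bot (ρ : BMSRep V) (v : V) (r : ℕ) {T : ℤ} (hT : T < 0) :
    Wsp ρ v r T = ⊥ := by
  apply le_antisymm _ bot_le
  rw [Wsp, Submodule.span_le]
  rintro x ⟨j, h0, hw, rfl⟩
  exact absurd hw (by omega)

lemma M_pos_monM (ρ : BMSRep V) {v : V} {h1 h2 : ℂ} (hV : ρ.IsVerma v h1 h2)
    (j : ℕ →₀ ℕ) (p : ℤ) (hp : 1 ≤ p) : ρ.M p (ρ.monM j v) = 0 := by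
  calc ρ.M p (ρ.monM j v) = (ρ.M p * ρ.monM j) v := rfl
    _ = (ρ.monM j * ρ.M p) v := by rw [(M_commute_monM ρ p j).eq]
    _ = ρ.monM j (ρ.M p v) := rfl
    _ = 0 := by rw [hV.hwM p hp, map_zero]

lemma M_zero_monM (ρ : BMSRep V) {v : V} {h1 h2 : ℂ} (hV : ρ.IsVerma v h1 h2)
    (j : ℕ →₀ ℕ) : ρ.M 0 (ρ.monM j v) = h2 • ρ.monM j v := by
  calc ρ.M 0 (ρ.monM j v) = (ρ.M 0 * ρ.monM j) v := rfl
    _ = (ρ.monM j * ρ.M 0) v := by rw [(M_commute_monM ρ 0 j).eq]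
    _ = ρ.monM j (ρ.M 0 v) := rfl
    _ = h2 • ρ.monM j v := by rw [hV.hM0, map_smul]

lemma M_neg_mapsTo (ρ : BMSRep V) (v : V) (r c : ℕ) (hc : 1 ≤ c) (T : ℤ) {x : V}
    (hx : x ∈ Wsp ρ v r T) :
    ρ.M (-(c : ℤ)) x ∈ Wsp ρ v r (T + if r ≤ c then (c : ℤ) else 0) := by
  induction hx using Submodule.span_induction with
  | mem x hx =>
    obtain ⟨j, h0, hw, rfl⟩ := hx
    have he : ρ.M (-(c : ℤ)) (ρ.monM j v) = ρ.monM (j + Finsupp.single c 1) v := by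
      rw [← M_mul_monM ρ j c hc]; rfl
    rw [he]
    apply mem_Wsp
    · rw [Finsupp.add_apply, h0, Finsupp.single_apply, if_neg (by omega : ¬ c = 0)]
      rfl
    · rw [tailwt_add_single]
      push_cast
      split_ifs <;> omega
  | zero => rw [map_zero]; exact zero_mem _
  | add x y _ _ hx hy => rw [map_add]; exact add_mem hx hy
  | smul a x _ hx => rw [map_smul]; exact Submodule.smul_mem _ _ hx

lemma L_on_monM (ρ : BMSRep V) {v : V} {h1 h2 : ℂ} (hV : ρ.IsVerma v h1 h2)
    (r m : ℕ) (hr : 1 ≤ r) (hm : r ≤ m) :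
    ∀ d (j : ℕ →₀ ℕ), (j.sum fun _ k => k) = d → j 0 = 0 →
      ρ.L (m : ℤ) (ρ.monM j v) ∈ Wsp ρ v r ((tailwt r j : ℤ) - m) := by
  intro d
  induction d with
  | zero =>
    intro j hd h0
    have hj : j = 0 := by
      ext a
      rcases eq_or_ne (j a) 0 with h | h
      · simp [h]
      · exact absurd ((Finset.sum_eq_zero_iff.mp hd) a
          (Finsupp.mem_support_iff.mpr h)) h
    subst hj
    have : ρ.monM (0 : ℕ →₀ ℕ) v = v := by
      simp [BMSRep.monM, tower]
    rw [this, hV.hwL (m : ℤ) (by exact_mod_cast (by omega : 1 ≤ m))]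
    exact zero_mem _
  | succ d ih =>
    intro j hd h0
    have hne : j ≠ 0 := by
      rintro rfl
      simp [Finsupp.sum] at hd
    obtain ⟨c, hc⟩ := Finsupp.support_nonempty_iff.mpr hne
    have hjc : 1 ≤ j c := Nat.one_le_iff_ne_zero.mpr (Finsupp.mem_support_iff.mp hc)
    have hc1 : 1 ≤ c := by
      rcases Nat.eq_zero_or_pos c with rfl | h
      · omega
      · exact h
    set j' : ℕ →₀ ℕ := j - Finsupp.single c 1 with hj'def
    have hrec : j' + Finsupp.single c 1 = j := by
      ext a
      rw [Finsupp.add_apply, hj'def, Finsupp.tsub_apply, Finsupp.single_apply]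
      split_ifs with h
      · subst h; omega
      · omega
    have h0' : j' 0 = 0 := by
      simp [hj'def, Finsupp.tsub_apply, h0]
    have hd' : (j'.sum fun _ k => k) = d := by
      have hsum : (j'.sum fun _ k => k) + ((Finsupp.single c 1).sum fun _ k => k)
          = (j.sum fun _ k => k) := by
        rw [← Finsupp.sum_add_index (fun a _ => rfl) (fun a _ b₁ b₂ => rfl), hrec]
      rw [Finsupp.sum_single_index rfl] at hsum
      omega
    have htw : tailwt r j = tailwt r j' + (if r ≤ c then c else 0) := by
      rw [← hrec, tailwt_add_single]
    have hmon : ρ.monM j = ρ.M (-(c : ℤ)) * ρ.monM j' := by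
      rw [M_mul_monM ρ j' c hc1, hrec]
    set x := ρ.monM j' v with hxdef
    -- commutation relation
    have hLM := ρ.comm_LM (m : ℤ) (-(c : ℤ))
    rw [Ring.lie_def, sub_eq_iff_eq_add] at hLM
    have key : ρ.L (m : ℤ) (ρ.monM j v)
        = (((m : ℤ) : ℂ) - ((-(c : ℤ) : ℤ) : ℂ)) • ρ.M ((m : ℤ) + -(c : ℤ)) x
          + (if (m : ℤ) + -(c : ℤ) = 0
              then (((m : ℤ) : ℂ)^3 - ((m : ℤ) : ℂ)) / 12 * ρ.c2 else 0) • x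
          + ρ.M (-(c : ℤ)) (ρ.L (m : ℤ) x) := by
      have e1 : ρ.L (m : ℤ) (ρ.monM j v)
          = ((ρ.L (m : ℤ) * ρ.M (-(c : ℤ))) * ρ.monM j') v := by
        rw [mul_assoc, ← hmon]; rfl
      rw [e1, hLM]
      simp only [add_mul, smul_mul_assoc, one_mul, LinearMap.add_apply,
        LinearMap.smul_apply, Module.End.mul_apply, hxdef]
    rw [key]
    have hx' : x ∈ Wsp ρ v r (tailwt r j') := mem_Wsp ρ v r _ j' h0' le_rfl
    -- third summand
    have hmem3 : ρ.M (-(c : ℤ)) (ρ.L (m : ℤ) x) ∈ Wsp ρ v r ((tailwt r j : ℤ) - m) := by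
      have h3 := M_neg_mapsTo ρ v r c hc1 _ (ih j' hd' h0')
      refine Wsp_mono ρ v r ?_ h3
      split_ifs with h <;> simp [htw, h] <;> push_cast <;> omega
    -- second summand
    have hmem2 : (if (m : ℤ) + -(c : ℤ) = 0
          then (((m : ℤ) : ℂ)^3 - ((m : ℤ) : ℂ)) / 12 * ρ.c2 else 0) • x
        ∈ Wsp ρ v r ((tailwt r j : ℤ) - m) := by
      rcases eq_or_ne m c with rfl | hmc
      · apply Submodule.smul_mem
        refine Wsp_mono ρ v r ?_ hx'
        rw [htw, if_pos hm]
        push_cast; omega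
      · rw [if_neg (by omega), zero_smul]
        exact zero_mem _
    -- first summand
    have hmem1 : (((m : ℤ) : ℂ) - ((-(c : ℤ) : ℤ) : ℂ)) • ρ.M ((m : ℤ) + -(c : ℤ)) x
        ∈ Wsp ρ v r ((tailwt r j : ℤ) - m) := by
      apply Submodule.smul_mem
      rcases lt_trichotomy c m with hlt | heq | hgt
      · rw [hxdef, M_pos_monM ρ hV j' _ (by omega : 1 ≤ (m : ℤ) + -(c : ℤ))]
        exact zero_mem _
      · have : (m : ℤ) + -(c : ℤ) = 0 := by omega
        rw [this, hxdef, M_zero_monM ρ hV j']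
        apply Submodule.smul_mem
        refine Wsp_mono ρ v r ?_ (mem_Wsp ρ v r _ j' h0' le_rfl)
        rw [htw, if_pos (heq ▸ hm)]
        push_cast; omega
      · have he : (m : ℤ) + -(c : ℤ) = -((c - m : ℕ) : ℤ) := by push_cast; omega
        have hcm : 1 ≤ c - m := by omega
        rw [he, hxdef]
        have he2 : ρ.M (-((c - m : ℕ) : ℤ)) (ρ.monM j' v)
            = ρ.monM (j' + Finsupp.single (c - m) 1) v := by
          rw [← M_mul_monM ρ j' (c - m) hcm]; rfl
        rw [he2]
        apply mem_Wsp
        · rw [Finsupp.add_apply, h0', Finsupp.single_apply,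
            if_neg (by omega : ¬ c - m = 0)]
          rfl
        · rw [tailwt_add_single, htw, if_pos (by omega : r ≤ c)]
          split_ifs <;> push_cast <;> omega
    exact add_mem (add_mem hmem1 hmem2) hmem3

lemma L_mapsTo (ρ : BMSRep V) {v : V} {h1 h2 : ℂ} (hV : ρ.IsVerma v h1 h2)
    (r m : ℕ) (hr : 1 ≤ r) (hm : r ≤ m) (T : ℤ) {x : V} (hx : x ∈ Wsp ρ v r T) :
    ρ.L (m : ℤ) x ∈ Wsp ρ v r (T - m) := by
  induction hx using Submodule.span_induction with
  | mem x hx =>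
    obtain ⟨j, h0, hw, rfl⟩ := hx
    exact Wsp_mono ρ v r (by omega)
      (L_on_monM ρ hV r m hr hm (j.sum fun _ k => k) j rfl h0)
  | zero => rw [map_zero]; exact zero_mem _
  | add x y _ _ hx hy => rw [map_add]; exact add_mem hx hy
  | smul a x _ hx => rw [map_smul]; exact Submodule.smul_mem _ _ hx

lemma L_pow_mapsTo (ρ : BMSRep V) {v : V} {h1 h2 : ℂ} (hV : ρ.IsVerma v h1 h2)
    (r m : ℕ) (hr : 1 ≤ r) (hm : r ≤ m) (k : ℕ) :
    ∀ (T : ℤ) {x : V}, x ∈ Wsp ρ v r T →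
      ((ρ.L (m : ℤ))^k) x ∈ Wsp ρ v r (T - k * m) := by
  induction k with
  | zero =>
    intro T x hx
    simpa using hx
  | succ k ih =>
    intro T x hx
    have h1 : ((ρ.L (m : ℤ))^(k + 1)) x = ((ρ.L (m : ℤ))^k) (ρ.L (m : ℤ) x) := by
      rw [pow_succ]; rfl
    rw [h1]
    refine Wsp_mono ρ v r (le_of_eq ?_) (ih _ (L_mapsTo ρ hV r m hr hm T hx))
    push_cast; ring

lemma towerR_shift_mapsTo (ρ : BMSRep V) {v : V} {h1 h2 : ℂ} (hV : ρ.IsVerma v h1 h2)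
    (i : ℕ →₀ ℕ) (r s : ℕ) (hr : 1 ≤ r) (hs : r ≤ s + 1) :
    ∀ n (T : ℤ) (x : V), x ∈ Wsp ρ v r T →
      (towerR (fun t => (ρ.L ((s + t : ℕ) : ℤ))^(i (s + t))) n) x
        ∈ Wsp ρ v r (T - (∑ a ∈ Finset.Icc (s + 1) (s + n), a * i a : ℕ)) := by
  intro n
  induction n with
  | zero =>
    intro T x hx
    have : Finset.Icc (s + 1) (s + 0) = ∅ := by
      apply Finset.Icc_eq_empty; omega
    simpa [towerR, this] using hx
  | succ n ih =>
    intro T x hx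
    have h1 : ((ρ.L ((s + (n + 1) : ℕ) : ℤ))^(i (s + (n + 1)))) x
        ∈ Wsp ρ v r (T - (i (s + (n + 1))) * ((s + (n + 1) : ℕ) : ℤ)) :=
      L_pow_mapsTo ρ hV r (s + (n + 1)) hr (by omega) _ T hx
    have h2 := ih _ _ h1
    have h3 : (towerR (fun t => (ρ.L ((s + t : ℕ) : ℤ))^(i (s + t))) (n + 1)) x
        = (towerR (fun t => (ρ.L ((s + t : ℕ) : ℤ))^(i (s + t))) n)
            (((ρ.L ((s + (n + 1) : ℕ) : ℤ))^(i (s + (n + 1)))) x) := by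
      rw [towerR_succ]; rfl
    rw [h3]
    refine Wsp_mono ρ v r (le_of_eq ?_) h2
    rw [show s + (n + 1) = (s + n) + 1 from rfl,
      Finset.sum_Icc_succ_top (by omega : s + 1 ≤ s + n + 1)]
    push_cast; ring

lemma towerR_split (f : ℕ → Module.End ℂ V) (s : ℕ) :
    ∀ n, towerR f (s + n) = towerR f s * towerR (fun t => f (s + t)) n
  | 0 => by simp [towerR]
  | n + 1 => by
    rw [show s + (n + 1) = (s + n) + 1 from rfl, towerR_succ,
      towerR_split f s n, towerR_succ, mul_assoc]
    rfl

lemma tailwt_eq_sum_Icc (r N : ℕ) (j : ℕ →₀ ℕ) (hN : ∀ a, N < a → j a = 0) :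
    tailwt r j = ∑ a ∈ Finset.Icc r N, a * j a := by
  unfold tailwt
  rw [Finsupp.sum]
  have hh1 : ∑ a ∈ j.support, (if r ≤ a then a * j a else 0)
      = ∑ a ∈ j.support ∪ Finset.Icc r N, (if r ≤ a then a * j a else 0) :=
    Finset.sum_subset Finset.subset_union_left (fun a _ ha => by
      simp [Finsupp.notMem_support_iff.mp ha])
  have hh2 : ∑ a ∈ j.support ∪ Finset.Icc r N, (if r ≤ a then a * j a else 0)
      = ∑ a ∈ Finset.Icc r N, (if r ≤ a then a * j a else 0) :=
    (Finset.sum_subset Finset.subset_union_right (fun a _ ha => by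
      simp only [Finset.mem_Icc, not_and_or, not_le] at ha
      rcases ha with h | h
      · rw [if_neg (by omega)]
      · simp [hN a h])).symm
  rw [hh1, hh2]
  exact Finset.sum_congr rfl (fun a ha => if_pos (Finset.mem_Icc.mp ha).1)

end Aux

/-- For multi-indices `i > j` in lexicographic order with equal weights
`|i| = |j|`, applying the raising operators `L_1^{i_1} L_2^{i_2} ⋯` to the
monomial `M^j · 1` in the Verma module gives `0`; equivalently the contravariant
pairing `⟨L^i · 1, M^j · 1⟩` vanishes. -/
theorem raising_L_on_M_monomial_eq_zero {V : Type*} [AddCommGroup V] [Module ℂ V]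
    (ρ : BMSRep V) (v : V) (h1 h2 : ℂ) (hV : ρ.IsVerma v h1 h2)
    (i j : ℕ →₀ ℕ) (hi0 : i 0 = 0) (hj0 : j 0 = 0)
    (hwt : (i.sum fun a m => a * m) = (j.sum fun a m => a * m))
    (hlex : ∃ r : ℕ, j r < i r ∧ ∀ s : ℕ, r < s → i s = j s) :
    ρ.raiseL i (ρ.monM j v) = 0 := by
  obtain ⟨r, hrj, hrs⟩ := hlex
  have hr1 : 1 ≤ r := by
    rcases Nat.eq_zero_or_pos r with rfl | h
    · omega
    · exact h
  have hir : i r ≠ 0 := by omega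
  have hrN : r ≤ i.support.sup id :=
    Finset.le_sup (f := id) (Finsupp.mem_support_iff.mpr hir)
  set N := i.support.sup id with hN
  have hjN : ∀ a, N < a → j a = 0 := by
    intro a ha
    have hra : r < a := lt_of_le_of_lt hrN ha
    rw [← hrs a hra]
    by_contra h
    have := Finset.le_sup (f := id) (Finsupp.mem_support_iff.mpr h)
    simp only [id] at this
    omega
  set s := r - 1 with hs
  have hsN : s + (N - s) = N := by omega
  have hsplit : ρ.raiseL i (ρ.monM j v)
      = (towerR (fun a => (ρ.L (a : ℤ))^(i a)) s)
          ((towerR (fun t => (ρ.L ((s + t : ℕ) : ℤ))^(i (s + t))) (N - s))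
            (ρ.monM j v)) := by
    have hsp := towerR_split (fun a => (ρ.L (a : ℤ))^(i a)) s (N - s)
    rw [hsN] at hsp
    show (towerR (fun a => (ρ.L (a : ℤ))^(i a)) N) (ρ.monM j v) = _
    rw [hsp]
    rfl
  have hmem : ρ.monM j v ∈ Wsp ρ v r (tailwt r j) :=
    mem_Wsp ρ v r _ j hj0 le_rfl
  have hG := towerR_shift_mapsTo ρ hV i r s hr1 (by omega) (N - s) _ _ hmem
  have hBc : ((tailwt r j : ℤ))
      - ((∑ a ∈ Finset.Icc (s + 1) (s + (N - s)), a * i a : ℕ) : ℤ) < 0 := by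
    have e1 : tailwt r j = ∑ a ∈ Finset.Icc r N, a * j a := tailwt_eq_sum_Icc r N j hjN
    have e2 : Finset.Icc (s + 1) (s + (N - s)) = Finset.Icc r N := by
      rw [hsN]
      congr 1
      omega
    rw [e1, e2]
    have hlt : ∑ a ∈ Finset.Icc r N, a * j a < ∑ a ∈ Finset.Icc r N, a * i a := by
      apply Finset.sum_lt_sum
      · intro a ha
        rcases eq_or_lt_of_le (Finset.mem_Icc.mp ha).1 with h | h
        · subst h
          exact Nat.mul_le_mul le_rfl (le_of_lt hrj)
        · rw [hrs a h]
      · exact ⟨r, Finset.mem_Icc.mpr ⟨le_rfl, hrN⟩,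
          mul_lt_mul_of_pos_left hrj (by omega)⟩
    omega
  rw [Wsp_eq_bot ρ v r hBc, Submodule.mem_bot] at hG
  rw [hsplit, hG, map_zero]
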